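/- Let P ⊆ ℝ² be finite with |P| ≥ 2. Then the undirected Semi-Yao graph of P has at least one edge, and the minimum of ‖p − q‖ over all edges {p,q} of the undirected Semi-Yao graph of P equals the minimum of ‖p − q‖ over all pairs of distinct points p, q ∈ P (the closest-pair distance of P). -/

import Mathlib

/- Common geometric setup: the Euclidean plane, wedges `W_l`, bisectors `b_l`,
equilateral triangles `∆_l` and `l`-tri's, circular sectors `σ_l` and `l`-pies,
and the proximity graphs (Semi-Yao, nearest-neighbor, Equilateral/Pie Delaunay,
Yao) together with Euclidean minimum spanning trees. -/

open Real EuclideanGeometry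
open scoped RealInnerProductSpace

noncomputable section

abbrev E : Type := EuclideanSpace ℝ (Fin 2)

/-- The point `(a, b)` in the Euclidean plane. -/
def pt (a b : ℝ) : E := (WithLp.equiv 2 (Fin 2 → ℝ)).symm ![a, b]

/-- The unit vector at polar angle `θ`. -/
def dir (θ : ℝ) : E := pt (Real.cos θ) (Real.sin θ)

/-- The lower boundary angle `(2l-1)π/6` of the `l`-th wedge. -/
def lo (l : Fin 6) : ℝ := (2 * ((l : ℕ) : ℝ) - 1) * π / 6

/-- The upper boundary angle `(2l+1)π/6` of the `l`-th wedge. -/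
def hi (l : Fin 6) : ℝ := (2 * ((l : ℕ) : ℝ) + 1) * π / 6

/-- The half-open wedge `W_l`: all nonzero points whose polar angle (mod `2π`)
lies in `[(2l-1)π/6, (2l+1)π/6)`. -/
def wedge (l : Fin 6) : Set E :=
  {x | x ≠ 0 ∧ ∃ θ : ℝ, lo l ≤ θ ∧ θ < hi l ∧ x = ‖x‖ • dir θ}

/-- `W_l(p)`, the translate of `W_l` with apex `p`. -/
def wedgeAt (l : Fin 6) (p : E) : Set E := {x | x - p ∈ wedge l}

/-- The unit bisector vector `b_l = (cos(lπ/3), sin(lπ/3))` of `W_l`. -/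
def bvec (l : Fin 6) : E := dir (((l : ℕ) : ℝ) * π / 3)

/-- `V_l(p) = P ∩ W_l(p)`. -/
def Vl (P : Finset E) (l : Fin 6) (p : E) : Set E := {x | x ∈ P ∧ x ∈ wedgeAt l p}

/-- The closed equilateral triangle `∆_l` with vertices `0`, `dir ((2l-1)π/6)`,
`dir ((2l+1)π/6)`. -/
def tri (l : Fin 6) : Set E := convexHull ℝ {0, dir (lo l), dir (hi l)}

/-- The vertex set of `∆_l`. -/
def triVerts (l : Fin 6) : Set E := {0, dir (lo l), dir (hi l)}

/-- The `l`-tri `c + lam • ∆_l`. -/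
def lTri (l : Fin 6) (c : E) (lam : ℝ) : Set E := (fun x => c + lam • x) '' tri l

/-- The closed circular sector (piece of pie) `σ_l` of the unit disk. -/
def sector (l : Fin 6) : Set E :=
  {x | ‖x‖ ≤ 1 ∧ (x = 0 ∨ ∃ θ : ℝ, lo l ≤ θ ∧ θ ≤ hi l ∧ x = ‖x‖ • dir θ)}

/-- The `l`-pie `c + lam • σ_l`. -/
def lPie (l : Fin 6) (c : E) (lam : ℝ) : Set E := (fun x => c + lam • x) '' sector l

/-- Directed Semi-Yao graph edge from `a` to `b`: `a ∈ V_l(b)` for some `l` and `a`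
has the minimum `b_l`-coordinate among the points of `V_l(b)`. -/
def SYG (P : Finset E) (a b : E) : Prop :=
  b ∈ P ∧ ∃ l : Fin 6, a ∈ Vl P l b ∧
    ∀ r ∈ Vl P l b, ⟪a - b, bvec l⟫ ≤ ⟪r - b, bvec l⟫

/-- Undirected Semi-Yao graph edge. -/
def SYGu (P : Finset E) (p q : E) : Prop := SYG P p q ∨ SYG P q p

/-- Directed nearest-neighbor graph edge from `a` to `b`: `b ∈ P \ {a}` and
`‖a - b‖ = min_{r ∈ P \ {a}} ‖a - r‖`. -/
def NNG (P : Finset E) (a b : E) : Prop :=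
  a ∈ P ∧ b ∈ P ∧ b ≠ a ∧ ∀ r ∈ P, r ≠ a → ‖a - b‖ ≤ ‖a - r‖

/-- Edge of the Equilateral Delaunay triangulation `EDT_l(P)`: there is an `l`-tri,
empty with respect to `P`, with both endpoints on its boundary. -/
def EDT (P : Finset E) (l : Fin 6) (p q : E) : Prop :=
  p ∈ P ∧ q ∈ P ∧ p ≠ q ∧ ∃ c : E, ∃ lam : ℝ, 0 < lam ∧
    p ∈ frontier (lTri l c lam) ∧ q ∈ frontier (lTri l c lam) ∧
    ∀ r ∈ P, r ∉ interior (lTri l c lam)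

/-- Edge of the Equilateral Delaunay graph `EDG(P) = EDT_0(P) ∪ EDT_1(P)`. -/
def EDG (P : Finset E) (p q : E) : Prop := EDT P 0 p q ∨ EDT P 1 p q

/-- Directed Yao-graph edge from `p` to `q`: `q ∈ V_l(p)` for some `l` and
`‖p - q‖ = min_{r ∈ V_l(p)} ‖p - r‖`. -/
def YG (P : Finset E) (p q : E) : Prop :=
  p ∈ P ∧ ∃ l : Fin 6, q ∈ Vl P l p ∧ ∀ r ∈ Vl P l p, ‖p - q‖ ≤ ‖p - r‖

/-- Edge of the Pie Delaunay triangulation `PDT_l(P)`: there is an `l`-pie, empty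
with respect to `P`, with both endpoints on its boundary. -/
def PDT (P : Finset E) (l : Fin 6) (p q : E) : Prop :=
  p ∈ P ∧ q ∈ P ∧ p ≠ q ∧ ∃ c : E, ∃ lam : ℝ, 0 < lam ∧
    p ∈ frontier (lPie l c lam) ∧ q ∈ frontier (lPie l c lam) ∧
    ∀ r ∈ P, r ∉ interior (lPie l c lam)

/-- Edge of the Pie Delaunay graph `PDG(P) = PDT_0(P) ∪ ⋯ ∪ PDT_5(P)`. -/
def PDG (P : Finset E) (p q : E) : Prop := ∃ l : Fin 6, PDT P l p q

/-- Total Euclidean edge weight of a graph on the points of `P`. -/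
def edgeWeight (P : Finset E) (G : SimpleGraph {x // x ∈ P}) : ℝ :=
  ∑ e ∈ G.edgeSet.toFinite.toFinset,
    Sym2.lift ⟨fun (a b : {x // x ∈ P}) => ‖(a : E) - (b : E)‖,
      fun _ _ => norm_sub_rev _ _⟩ e

/-- `T` is a Euclidean minimum spanning tree of `P`: a spanning tree (connected and
acyclic graph on the vertex set `P`) of minimum total Euclidean edge weight. -/
def IsEMST (P : Finset E) (T : SimpleGraph {x // x ∈ P}) : Prop :=
  T.IsTree ∧ ∀ G : SimpleGraph {x // x ∈ P}, G.IsTree → edgeWeight P T ≤ edgeWeight P G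

/- A closest pair `{a, b}` of `P` is a Semi-Yao edge. Put `b` in the wedge `W_l(a)`. For any
other `r ∈ V_l(a)`, closeness gives `‖b - a‖ ≤ ‖r - b‖`, i.e. `2⟪b - a, r - a⟫ ≤ ‖r - a‖²`.
Writing `b - a = s • dir (c + α)` and `r - a = t • dir (c + β)`, where `c` is the bisector angle
and `|α|, |β| ≤ π/6`, this reads `2 s cos (α - β) ≤ t`, and then
`t cos β ≥ s (cos α + cos (α - 2β)) ≥ s cos α` since `|α - 2β| ≤ π/2`: `b` minimizes
the `b_l`-coordinate over `V_l(a)`. Conversely every Semi-Yao edge joins two distinct points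
of `P`, so both minima equal `‖a - b‖`. -/

lemma inner_smul_dir_smul_dir (s t θ φ : ℝ) :
    ⟪s • dir θ, t • dir φ⟫ = s * t * Real.cos (θ - φ) := by
  simp [dir, pt, PiLp.inner_apply, Fin.sum_univ_two, Real.cos_sub]
  ring

lemma mul_cos_le_mul_cos {s t α β : ℝ} (hs : 0 ≤ s) (hα : |α| ≤ π / 6) (hβ : |β| ≤ π / 6)
    (h : 2 * s * Real.cos (α - β) ≤ t) : s * Real.cos α ≤ t * Real.cos β := by
  rw [abs_le] at hα hβ
  have hcos_β : 0 ≤ Real.cos β := Real.cos_nonneg_of_mem_Icc ⟨by linarith, by linarith⟩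
  have hcos_α_2β : 0 ≤ Real.cos (α - 2 * β) :=
    Real.cos_nonneg_of_mem_Icc ⟨by linarith, by linarith⟩
  have hsum : Real.cos α + Real.cos (α - 2 * β) = 2 * Real.cos (α - β) * Real.cos β := by
    rw [Real.cos_add_cos]; ring_nf
  calc s * Real.cos α ≤ s * (Real.cos α + Real.cos (α - 2 * β)) :=
        mul_le_mul_of_nonneg_left (le_add_of_nonneg_right hcos_α_2β) hs
    _ = 2 * s * Real.cos (α - β) * Real.cos β := by rw [hsum]; ring
    _ ≤ t * Real.cos β := mul_le_mul_of_nonneg_right h hcos_β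

lemma exists_eq_norm_smul_dir_of_mem_wedge {l : Fin 6} {x : E} (hx : x ∈ wedge l) :
    ∃ θ, |θ - (l : ℕ) * π / 3| ≤ π / 6 ∧ x = ‖x‖ • dir θ := by
  obtain ⟨-, θ, hlo, hhi, hxθ⟩ := hx
  refine ⟨θ, abs_le.mpr ⟨?_, ?_⟩, hxθ⟩ <;> [unfold lo at hlo; unfold hi at hhi] <;> linarith

lemma inner_bvec_le_of_mem_wedge {l : Fin 6} {u v : E} (hu : u ∈ wedge l) (hv : v ∈ wedge l)
    (h : ‖u‖ ≤ ‖v - u‖) : ⟪u, bvec l⟫ ≤ ⟪v, bvec l⟫ := by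
  have hv0 : 0 < ‖v‖ := norm_pos_iff.mpr hv.1
  have huv : 2 * ⟪u, v⟫ ≤ ‖v‖ ^ 2 := by
    have := pow_le_pow_left₀ (norm_nonneg u) h 2
    rw [norm_sub_sq_real, real_inner_comm] at this
    linarith
  obtain ⟨θ, hθ, hu⟩ := exists_eq_norm_smul_dir_of_mem_wedge hu
  obtain ⟨φ, hφ, hv⟩ := exists_eq_norm_smul_dir_of_mem_wedge hv
  set c : ℝ := (l : ℕ) * π / 3
  have hb : bvec l = (1 : ℝ) • dir c := (one_smul ℝ _).symm
  have huv' : ⟪u, v⟫ = ‖u‖ * ‖v‖ * Real.cos (θ - φ) := by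
    conv_lhs => rw [hu, hv, inner_smul_dir_smul_dir]
  have hub : ⟪u, bvec l⟫ = ‖u‖ * Real.cos (θ - c) := by
    conv_lhs => rw [hu, hb, inner_smul_dir_smul_dir, mul_one]
  have hvb : ⟪v, bvec l⟫ = ‖v‖ * Real.cos (φ - c) := by
    conv_lhs => rw [hv, hb, inner_smul_dir_smul_dir, mul_one]
  rw [hub, hvb]
  refine mul_cos_le_mul_cos (norm_nonneg u) hθ hφ (le_of_mul_le_mul_left ?_ hv0)
  rw [sub_sub_sub_cancel_right]
  rw [huv'] at huv
  linarith

lemma dir_toIcoMod (a θ : ℝ) : dir (toIcoMod two_pi_pos a θ) = dir θ := by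
  rw [← self_sub_toIcoDiv_zsmul, zsmul_eq_mul, dir, dir, Real.cos_sub_int_mul_two_pi,
    Real.sin_sub_int_mul_two_pi]

lemma exists_eq_norm_smul_dir (x : E) : ∃ θ, x = ‖x‖ • dir θ := by
  rcases eq_or_ne x 0 with rfl | hx
  · exact ⟨0, by simp⟩
  set z : ℂ := ⟨x 0, x 1⟩
  have hz : ‖z‖ = ‖x‖ := by
    rw [EuclideanSpace.norm_eq, Complex.norm_def, Complex.normSq_apply]
    simp [Fin.sum_univ_two, z, sq]
  have hz0 : z ≠ 0 := norm_ne_zero_iff.mp (hz ▸ norm_ne_zero_iff.mpr hx)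
  refine ⟨z.arg, ?_⟩
  ext i
  fin_cases i
  · simp [dir, pt, Complex.cos_arg hz0, hz, z]; field_simp
  · simp [dir, pt, Complex.sin_arg, hz, z]; field_simp

lemma exists_lo_le_lt_hi {θ : ℝ} (h : θ ∈ Set.Ico (-(π / 6)) (-(π / 6) + 2 * π)) :
    ∃ l : Fin 6, lo l ≤ θ ∧ θ < hi l := by
  obtain ⟨h₁, h₂⟩ := h
  set y := (θ + π / 6) / (π / 3)
  have hy : 0 ≤ y := div_nonneg (by linarith) (by positivity)
  have hy6 : y < 6 := by rw [div_lt_iff₀ (by positivity)]; linarith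
  have hfl := Nat.floor_le hy
  have hlt := Nat.lt_floor_add_one y
  refine ⟨⟨⌊y⌋₊, (Nat.floor_lt hy).mpr (by exact_mod_cast hy6)⟩, ?_, ?_⟩
  · rw [le_div_iff₀ (by positivity)] at hfl
    simp only [lo]; linarith
  · rw [div_lt_iff₀ (by positivity)] at hlt
    simp only [hi]; linarith

lemma exists_mem_wedge {x : E} (hx : x ≠ 0) : ∃ l : Fin 6, x ∈ wedge l := by
  obtain ⟨θ, hθ⟩ := exists_eq_norm_smul_dir x
  obtain ⟨l, hlo, hhi⟩ := exists_lo_le_lt_hi (toIcoMod_mem_Ico two_pi_pos (-(π / 6)) θ)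
  exact ⟨l, hx, _, hlo, hhi, by rwa [dir_toIcoMod]⟩

def IsClosestPair {α : Type*} [SeminormedAddCommGroup α] (P : Finset α) (a b : α) : Prop :=
  a ∈ P ∧ b ∈ P ∧ a ≠ b ∧ ∀ x ∈ P, ∀ y ∈ P, x ≠ y → ‖a - b‖ ≤ ‖x - y‖

lemma exists_isClosestPair {α : Type*} [SeminormedAddCommGroup α] {P : Finset α}
    (hP : 2 ≤ P.card) : ∃ a b, IsClosestPair P a b := by
  obtain ⟨p, hp, q, hq, hpq⟩ := Finset.one_lt_card.mp hP
  obtain ⟨⟨a, b⟩, hab, hmin⟩ := P.offDiag.exists_min_image (fun x => ‖x.1 - x.2‖)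
    ⟨(p, q), Finset.mem_offDiag.mpr ⟨hp, hq, hpq⟩⟩
  obtain ⟨ha, hb, hne⟩ := Finset.mem_offDiag.mp hab
  exact ⟨a, b, ha, hb, hne, fun x hx y hy hxy => hmin (x, y) (Finset.mem_offDiag.mpr ⟨hx, hy, hxy⟩)⟩

lemma IsClosestPair.SYG {P : Finset E} {a b : E} (h : IsClosestPair P a b) : SYG P b a := by
  obtain ⟨ha, hb, hab, hmin⟩ := h
  obtain ⟨l, hl⟩ := exists_mem_wedge (sub_ne_zero.mpr hab.symm)
  refine ⟨ha, l, ⟨hb, hl⟩, fun r ⟨hr, hrl⟩ => ?_⟩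
  rcases eq_or_ne r b with rfl | hrb
  · exact le_rfl
  refine inner_bvec_le_of_mem_wedge hl hrl ?_
  rw [sub_sub_sub_cancel_right, norm_sub_rev b a, norm_sub_rev r b]
  exact hmin b hb r hr hrb.symm

lemma SYGu.mem_mem_ne {P : Finset E} {p q : E} (h : SYGu P p q) : p ∈ P ∧ q ∈ P ∧ p ≠ q := by
  rcases h with ⟨hq, -, ⟨hp, hpq, -⟩, -⟩ | ⟨hp, -, ⟨hq, hqp, -⟩, -⟩
  · exact ⟨hp, hq, fun h => hpq (by rw [h, sub_self])⟩
  · exact ⟨hp, hq, fun h => hqp (by rw [h, sub_self])⟩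

/-- for `|P| ≥ 2` the undirected Semi-Yao graph of `P` has at least one
edge, and the minimum edge length of the undirected Semi-Yao graph equals the
closest-pair distance of `P`. -/
theorem semiYao_min_edge_is_closest_pair (P : Finset E) (hP : 2 ≤ P.card) :
    (∃ p q : E, SYGu P p q) ∧
    sInf {d : ℝ | ∃ p q : E, SYGu P p q ∧ d = ‖p - q‖} =
      sInf {d : ℝ | ∃ p q : E, p ∈ P ∧ q ∈ P ∧ p ≠ q ∧ d = ‖p - q‖} := by
  obtain ⟨a, b, hclosest⟩ := exists_isClosestPair hP
  have hedge : SYGu P b a := Or.inl hclosest.SYG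
  obtain ⟨ha, hb, hab, hmin⟩ := hclosest
  have hSYG : IsLeast {d : ℝ | ∃ p q : E, SYGu P p q ∧ d = ‖p - q‖} ‖a - b‖ :=
    ⟨⟨b, a, hedge, norm_sub_rev a b⟩, by
      rintro _ ⟨p, q, hpq, rfl⟩
      obtain ⟨hp, hq, hne⟩ := hpq.mem_mem_ne
      exact hmin p hp q hq hne⟩
  have hpairs : IsLeast {d : ℝ | ∃ p q : E, p ∈ P ∧ q ∈ P ∧ p ≠ q ∧ d = ‖p - q‖} ‖a - b‖ :=
    ⟨⟨a, b, ha, hb, hab, rfl⟩, by rintro _ ⟨p, q, hp, hq, hne, rfl⟩; exact hmin p hp q hq hne⟩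
  exact ⟨⟨b, a, hedge⟩, by rw [hSYG.csInf_eq, hpairs.csInf_eq]⟩
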